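/- arXiv:2602.18188 — 4 statements merged into one kernel-verified Lean document; each statement's English description precedes it below -/
import Mathlib

section
/- Let G1 and G2 be 3-regular simple graphs, let k ≥ 1, and let x1 : E(G1) → {1,…,k} and x2 : E(G2) → {1,…,k} be edge labelings. Let G1' = gadget(G1, x1) and G2' = gadget(G2, x2) be the respective gadgeted graphs. If G1' and G2' are isomorphic as graphs, then there is a graph isomorphism φ : G1 → G2 such that x2({φ(u),φ(v)}) = x1({u,v}) for every edge {u,v} of G1; i.e., (G1, x1) and (G2, x2) are isomorphic as edge-labeled graphs. -/
/-!
Original vertices are exactly the vertices of a gadgeted graph lying on no triangle: every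
A-gadget vertex lies on one of the two triangles of its gadget, while the neighbours of an
original vertex are gadget endpoints, which are pairwise non-adjacent. So an isomorphism `Φ` of
gadgeted graphs restricts to a bijection of original vertices. Once the original vertices are
cut out, what remains falls apart into the expanded edges, and the piece of an edge `{u, v}`
reaches exactly the original vertices `u` and `v`. Hence `u ~ v` in `G` iff some gadget vertex
is attached to both, the set of such vertices has `6 * x s(u, v)` elements, and both
descriptions are transported by `Φ`.
-/

open scoped ENNReal

namespace LCLGadget

/-- Adjacency relation (one direction) of the A-gadget, on vertex indices `0,…,5`
representing the paper's vertices `1,…,6`. -/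
def AAdj (i j : Fin 6) : Prop :=
  (i, j) ∈ ([(0,1),(0,2),(1,2),(1,3),(2,4),(3,4),(3,5),(4,5)] : List (Fin 6 × Fin 6))

variable {V : Type} [LinearOrder V]

/-- The gadget vertices of the gadgeted graph `gadget(G, x)`: a vertex `⟨(a,b,i,j), _⟩`
is vertex `j` of the `i`-th A-gadget on the expanded edge replacing the edge `{a,b}`
(oriented so that `a < b`). -/
abbrev GadgetAux (G : SimpleGraph V) (x : Sym2 V → ℕ) : Type :=
  {p : V × V × ℕ × Fin 6 //
    p.1 < p.2.1 ∧ G.Adj p.1 p.2.1 ∧ p.2.2.1 < x s(p.1, p.2.1)}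

/-- Vertices of the gadgeted graph: original vertices (`Sum.inl`) and gadget
vertices (`Sum.inr`). -/
abbrev GadgetVert (G : SimpleGraph V) (x : Sym2 V → ℕ) : Type :=
  V ⊕ GadgetAux G x

/-- Base adjacency relation of the gadgeted graph (to be symmetrized):
vertex `0` (paper's `1`) of the first gadget is joined to the smaller endpoint,
vertex `5` (paper's `6`) of the last gadget is joined to the larger endpoint,
within one gadget the A-gadget edges are used, and consecutive gadgets of a chain
are joined by an edge from vertex `5` to vertex `0`. -/
def gadgetRel (G : SimpleGraph V) (x : Sym2 V → ℕ) :
    GadgetVert G x → GadgetVert G x → Prop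
  | Sum.inl sv, Sum.inr ⟨⟨a, b, i, j⟩, _⟩ =>
      (sv = a ∧ i = 0 ∧ j = 0) ∨ (sv = b ∧ i = x s(a, b) - 1 ∧ j = 5)
  | Sum.inr ⟨⟨a, b, i, j⟩, _⟩, Sum.inr ⟨⟨a', b', i', j'⟩, _⟩ =>
      a = a' ∧ b = b' ∧ ((i = i' ∧ AAdj j j') ∨ (i' = i + 1 ∧ j = 5 ∧ j' = 0))
  | _, _ => False

/-- The gadgeted graph `G' = gadget(G, x)`. -/
def gadgetGraph (G : SimpleGraph V) (x : Sym2 V → ℕ) : SimpleGraph (GadgetVert G x) :=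
  SimpleGraph.fromRel (gadgetRel G x)

/-- Weight of a (potential) edge of the gadgeted graph: `1/2` if it is incident to an
original vertex, `0` otherwise. -/
noncomputable def wt (G : SimpleGraph V) (x : Sym2 V → ℕ) :
    GadgetVert G x → GadgetVert G x → ℝ≥0∞
  | Sum.inl _, _ => 1/2
  | _, Sum.inl _ => 1/2
  | _, _ => 0

/-- The gadgeted distance `gdist(u,v)`: the minimum total weight of a path
from `u` to `v` in the gadgeted graph. -/
noncomputable def gdist (G : SimpleGraph V) (x : Sym2 V → ℕ) (u v : GadgetVert G x) : ℝ≥0∞ :=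
  ⨅ p : (gadgetGraph G x).Walk u v,
    (p.darts.map fun d => wt G x d.toProd.1 d.toProd.2).sum

/-- Membership of a vertex `u` in the `r`-gball around `c`. -/
def inGball (G : SimpleGraph V) (x : Sym2 V → ℕ) (r : ℕ) (c u : GadgetVert G x) : Prop :=
  gdist G x c u ≤ (r : ℝ≥0∞)

/-- `u` is an original vertex of the gadgeted graph. -/
def IsOriginal (G : SimpleGraph V) (x : Sym2 V → ℕ) (u : GadgetVert G x) : Prop :=
  ∃ v : V, u = Sum.inl v

/-- `u` is an outer vertex: a gadget vertex adjacent to an original vertex. -/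
def IsOuter (G : SimpleGraph V) (x : Sym2 V → ℕ) (u : GadgetVert G x) : Prop :=
  (∃ p, u = Sum.inr p) ∧ ∃ w, IsOriginal G x w ∧ (gadgetGraph G x).Adj u w

/-- `u` is an inner vertex: a gadget vertex not adjacent to any original vertex. -/
def IsInner (G : SimpleGraph V) (x : Sym2 V → ℕ) (u : GadgetVert G x) : Prop :=
  (∃ p, u = Sum.inr p) ∧ ¬ ∃ w, IsOriginal G x w ∧ (gadgetGraph G x).Adj u w

/-- `G` is a 3-regular graph. -/
def ThreeRegular (G : SimpleGraph V) : Prop :=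
  ∀ v : V, (G.neighborSet v).ncard = 3

/-- The edge labeling `x` takes positive values on all edges. -/
def PosLabels (G : SimpleGraph V) (x : Sym2 V → ℕ) : Prop :=
  ∀ e ∈ G.edgeSet, 0 < x e

/-- `x` is a distance-`2r` edge coloring of `G`: any two distinct edges of `G` at
distance at most `2r` from each other receive distinct labels. -/
def DistEdgeColoring (G : SimpleGraph V) (x : Sym2 V → ℕ) (r : ℕ) : Prop :=
  ∀ e ∈ G.edgeSet, ∀ f ∈ G.edgeSet, e ≠ f →
    (∃ a ∈ e, ∃ b ∈ f, G.edist a b ≤ (2 * r : ℕ)) → x e ≠ x f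

/-- The gadgeted graph `gadget(G,x)` is correctly gadgeted for parameter `r`. -/
def CorrectlyGadgeted (G : SimpleGraph V) (x : Sym2 V → ℕ) (r : ℕ) : Prop :=
  ThreeRegular G ∧ PosLabels G x ∧ DistEdgeColoring G x r

/-- `χ` is a distance-2 coloring of the gadgeted graph:
it is injective on `{v} ∪ N(v)` for every vertex `v`. -/
def Dist2Coloring (G : SimpleGraph V) (x : Sym2 V → ℕ) (χ : GadgetVert G x → ℕ) : Prop :=
  ∀ v : GadgetVert G x, Set.InjOn χ (insert v ((gadgetGraph G x).neighborSet v))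

/-- `χ` is edge-consistent in every `r`-gball: whenever `{v,u}` is an edge and
`v' ∈ gball_r(v)` has `χ(v') = χ(v)`, there is a neighbor `u'` of `v'` with
`χ(u') = χ(u)`. -/
def EdgeConsistent (G : SimpleGraph V) (x : Sym2 V → ℕ) (r : ℕ)
    (χ : GadgetVert G x → ℕ) : Prop :=
  ∀ v u : GadgetVert G x, (gadgetGraph G x).Adj v u →
    ∀ v', inGball G x r v v' → χ v' = χ v →
      ∃ u', (gadgetGraph G x).Adj v' u' ∧ χ u' = χ u

/-- `u` lies on a triangle (cycle of length 3) of the gadgeted graph. -/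
def OnTriangle (G : SimpleGraph V) (x : Sym2 V → ℕ) (u : GadgetVert G x) : Prop :=
  ∃ a b, (gadgetGraph G x).Adj u a ∧ (gadgetGraph G x).Adj u b ∧ (gadgetGraph G x).Adj a b

end LCLGadget

namespace LCLGadgetThms
open LCLGadget

variable {V : Type} [LinearOrder V]

open SimpleGraph

section Gadget

variable {G : SimpleGraph V} {x : Sym2 V → ℕ}

instance : DecidableRel AAdj := fun j j' => by unfold AAdj; infer_instance

lemma aAdj_irrefl : ∀ j : Fin 6, ¬ AAdj j j := by decide

@[simp] lemma not_adj_inl_inl {s t : V} : ¬ (gadgetGraph G x).Adj (.inl s) (.inl t) := by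
  simp [gadgetGraph, gadgetRel]

lemma adj_inl_inr {s a b : V} {i : ℕ} {j : Fin 6} {h} :
    (gadgetGraph G x).Adj (.inl s) (.inr ⟨(a, b, i, j), h⟩) ↔
      s = a ∧ i = 0 ∧ j = 0 ∨ s = b ∧ i = x s(a, b) - 1 ∧ j = 5 := by
  simp [gadgetGraph, gadgetRel]

lemma adj_inr_inr {a b a' b' : V} {i i' : ℕ} {j j' : Fin 6} {h h'} :
    (gadgetGraph G x).Adj (.inr ⟨(a, b, i, j), h⟩) (.inr ⟨(a', b', i', j'), h'⟩) ↔
      a = a' ∧ b = b' ∧ (i = i' ∧ (AAdj j j' ∨ AAdj j' j) ∨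
        i' = i + 1 ∧ j = 5 ∧ j' = 0 ∨ i = i' + 1 ∧ j' = 5 ∧ j = 0) := by
  simp only [gadgetGraph, gadgetRel, fromRel_adj, ne_eq, Sum.inr.injEq, Subtype.mk.injEq,
    Prod.mk.injEq]
  constructor
  · rintro ⟨-, ⟨rfl, rfl, h⟩ | ⟨rfl, rfl, h⟩⟩ <;> tauto
  · rintro ⟨rfl, rfl, h⟩
    refine ⟨fun ⟨_, _, hi, hj⟩ => ?_, by tauto⟩
    subst hi hj
    rcases h with ⟨-, h | h⟩ | ⟨h, -⟩ | ⟨h, -⟩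
    · exact aAdj_irrefl _ h
    · exact aAdj_irrefl _ h
    · omega
    · omega

lemma onTriangle_inr (p : GadgetAux G x) : OnTriangle G x (.inr p) := by
  obtain ⟨⟨a, b, i, j⟩, h⟩ := p
  -- the A-gadget is two triangles `{0,1,2}` and `{3,4,5}` joined by two edges
  obtain ⟨j₁, j₂, h₁, h₂, h₁₂⟩ : ∃ j₁ j₂ : Fin 6, (AAdj j j₁ ∨ AAdj j₁ j) ∧
      (AAdj j j₂ ∨ AAdj j₂ j) ∧ (AAdj j₁ j₂ ∨ AAdj j₂ j₁) := by
    clear h; revert j; decide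
  exact ⟨.inr ⟨(a, b, i, j₁), h⟩, .inr ⟨(a, b, i, j₂), h⟩, by simp [adj_inr_inr, h₁],
    by simp [adj_inr_inr, h₂], by simp [adj_inr_inr, h₁₂]⟩

lemma not_onTriangle_inl (s : V) : ¬ OnTriangle G x (.inl s) := by
  rintro ⟨_ | ⟨⟨a, b, i, j⟩, h⟩, _ | ⟨⟨a', b', i', j'⟩, h'⟩, h₁, h₂, h₁₂⟩
  any_goals exact not_adj_inl_inl (by assumption)
  have hA : ∀ j j' : Fin 6, (j = 0 ∨ j = 5) → (j' = 0 ∨ j' = 5) → ¬ AAdj j j' := by decide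
  rw [adj_inl_inr] at h₁ h₂
  rw [adj_inr_inr] at h₁₂
  obtain ⟨-, -, ⟨-, hjj | hjj⟩ | ⟨hi, rfl, rfl⟩ | ⟨hi, rfl, rfl⟩⟩ := h₁₂
  · exact hA _ _ (by tauto) (by tauto) hjj
  · exact hA _ _ (by tauto) (by tauto) hjj
  · grind
  · grind

lemma isOriginal_iff_not_onTriangle {u : GadgetVert G x} :
    IsOriginal G x u ↔ ¬ OnTriangle G x u := by
  rcases u with s | p
  · simp [IsOriginal, not_onTriangle_inl]
  · simp [IsOriginal, onTriangle_inr]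

end Gadget

section Chain

variable (G : SimpleGraph V) (x : Sym2 V → ℕ)

/-- The gadgeted graph with all edges at original vertices removed; its connected components
on gadget vertices are the expanded edges. -/
def chainGraph : SimpleGraph (GadgetVert G x) where
  Adj u w := (gadgetGraph G x).Adj u w ∧ ¬ IsOriginal G x u ∧ ¬ IsOriginal G x w
  symm := ⟨fun _ _ h => ⟨h.1.symm, h.2.2, h.2.1⟩⟩
  loopless := ⟨fun _ h => h.1.ne rfl⟩

def gadgetEdge (p : GadgetAux G x) : Sym2 V := s(p.1.1, p.1.2.1)

def IsAttached (w : GadgetVert G x) (c : V) : Prop :=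
  ∃ w', (chainGraph G x).Reachable w w' ∧ (gadgetGraph G x).Adj w' (.inl c)

def chainSet (u v : V) : Set (GadgetVert G x) :=
  {w | ¬ IsOriginal G x w ∧ IsAttached G x w u ∧ IsAttached G x w v}

variable {G x}

lemma chainGraph_adj_inr {p q : GadgetAux G x} :
    (chainGraph G x).Adj (.inr p) (.inr q) ↔ (gadgetGraph G x).Adj (.inr p) (.inr q) := by
  simp [chainGraph, IsOriginal]

lemma exists_eq_inr_of_chainGraph_reachable {p : GadgetAux G x} {w : GadgetVert G x}
    (h : (chainGraph G x).Reachable (.inr p) w) :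
    ∃ q, w = .inr q ∧ gadgetEdge G x q = gadgetEdge G x p := by
  rw [reachable_iff_reflTransGen] at h
  induction h with
  | refl => exact ⟨p, rfl, rfl⟩
  | @tail c c' _ hadj ih =>
    obtain ⟨⟨⟨a, b, i, j⟩, hq⟩, rfl, hpq⟩ := ih
    rcases c' with c' | ⟨⟨a', b', i', j'⟩, hq'⟩
    · exact absurd ⟨c', rfl⟩ hadj.2.2
    · obtain ⟨rfl, rfl, -⟩ := adj_inr_inr.1 hadj.1
      exact ⟨_, rfl, hpq⟩

lemma chainGraph_adj_of_aAdj {a b : V} {i : ℕ} (h : a < b ∧ G.Adj a b ∧ i < x s(a, b))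
    {j j' : Fin 6} (hj : AAdj j j') :
    (chainGraph G x).Adj (.inr ⟨(a, b, i, j'), h⟩) (.inr ⟨(a, b, i, j), h⟩) :=
  chainGraph_adj_inr.2 (adj_inr_inr.2 ⟨rfl, rfl, .inl ⟨rfl, .inr hj⟩⟩)

lemma chainGraph_reachable_gadget_zero {a b : V} {i : ℕ}
    (h : a < b ∧ G.Adj a b ∧ i < x s(a, b)) (j : Fin 6) :
    (chainGraph G x).Reachable (.inr ⟨(a, b, i, j), h⟩) (.inr ⟨(a, b, i, 0), h⟩) := by
  have step {j j'} (hj : AAdj j j') := (chainGraph_adj_of_aAdj h hj).reachable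
  fin_cases j
  · rfl
  · exact step (j := 0) (j' := 1) (by decide)
  · exact step (j := 0) (j' := 2) (by decide)
  · exact (step (j := 1) (j' := 3) (by decide)).trans (step (by decide))
  · exact (step (j := 2) (j' := 4) (by decide)).trans (step (by decide))
  · exact (step (j := 3) (j' := 5) (by decide)).trans
      ((step (j := 1) (by decide)).trans (step (by decide)))

lemma chainGraph_reachable_first {a b : V} (hab : a < b) (hadj : G.Adj a b) {i : ℕ}
    (hi : i < x s(a, b)) (j : Fin 6) :
    (chainGraph G x).Reachable (.inr ⟨(a, b, i, j), hab, hadj, hi⟩)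
      (.inr ⟨(a, b, 0, 0), hab, hadj, i.zero_le.trans_lt hi⟩) := by
  induction i generalizing j with
  | zero => exact chainGraph_reachable_gadget_zero _ j
  | succ i ih =>
    have link : (chainGraph G x).Adj (.inr ⟨(a, b, i + 1, 0), hab, hadj, hi⟩)
        (.inr ⟨(a, b, i, 5), hab, hadj, i.lt_succ_self.trans hi⟩) :=
      chainGraph_adj_inr.2 (adj_inr_inr.2 ⟨rfl, rfl, .inr (.inr ⟨rfl, rfl, rfl⟩)⟩)
    exact (chainGraph_reachable_gadget_zero _ j).trans
      (link.reachable.trans (ih (i.lt_succ_self.trans hi) 5))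

lemma isAttached_inr_iff {p : GadgetAux G x} {c : V} :
    IsAttached G x (.inr p) c ↔ c ∈ gadgetEdge G x p := by
  constructor
  · rintro ⟨w, hpw, hwc⟩
    obtain ⟨⟨⟨a, b, i, j⟩, hq⟩, rfl, hqp⟩ := exists_eq_inr_of_chainGraph_reachable hpw
    rw [← hqp, gadgetEdge, Sym2.mem_iff]
    rcases adj_inl_inr.1 hwc.symm with ⟨rfl, -⟩ | ⟨rfl, -⟩ <;> simp
  · obtain ⟨⟨a, b, i, j⟩, hab, hadj, hi⟩ := p
    simp only [gadgetEdge, Sym2.mem_iff]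
    have hlast : x s(a, b) - 1 < x s(a, b) := Nat.sub_one_lt_of_lt hi
    rintro (rfl | rfl)
    · exact ⟨_, chainGraph_reachable_first hab hadj hi j,
        (adj_inl_inr.2 (.inl ⟨rfl, rfl, rfl⟩)).symm⟩
    · exact ⟨_, (chainGraph_reachable_first hab hadj hi j).trans
        (chainGraph_reachable_first hab hadj hlast 5).symm,
        (adj_inl_inr.2 (.inr ⟨rfl, rfl, rfl⟩)).symm⟩

lemma mem_chainSet_iff {u v : V} (huv : u ≠ v) {w : GadgetVert G x} :
    w ∈ chainSet G x u v ↔ ∃ p, w = .inr p ∧ gadgetEdge G x p = s(u, v) := by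
  rcases w with c | p
  · simp [chainSet, IsOriginal]
  · simp [chainSet, IsOriginal, isAttached_inr_iff, Sym2.mem_and_mem_iff huv]

lemma exists_gadgetEdge_eq (hx : PosLabels G x) {e : Sym2 V} (he : e ∈ G.edgeSet) :
    ∃ p, gadgetEdge G x p = e := by
  induction e using Sym2.ind with | _ u v
  rcases lt_or_gt_of_ne (G.ne_of_adj he) with huv | hvu
  · exact ⟨⟨(u, v, 0, 0), huv, he, hx _ he⟩, rfl⟩
  · exact ⟨⟨(v, u, 0, 0), hvu, he.symm, Sym2.eq_swap ▸ hx _ he⟩, Sym2.eq_swap⟩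

lemma adj_iff_chainSet_nonempty (hx : PosLabels G x) {u v : V} :
    G.Adj u v ↔ u ≠ v ∧ (chainSet G x u v).Nonempty := by
  constructor
  · intro he
    obtain ⟨p, hp⟩ := exists_gadgetEdge_eq hx ((mem_edgeSet G).2 he)
    exact ⟨he.ne, .inr p, (mem_chainSet_iff he.ne).2 ⟨p, rfl, hp⟩⟩
  · rintro ⟨huv, w, hw⟩
    obtain ⟨⟨⟨a, b, i, j⟩, _, hab, _⟩, _, hp⟩ := (mem_chainSet_iff huv).1 hw
    rw [← mem_edgeSet, ← hp]
    exact hab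

lemma ncard_setOf_gadgetEdge_eq {u v : V} (huv : G.Adj u v) :
    {p : GadgetAux G x | gadgetEdge G x p = s(u, v)}.ncard = 6 * x s(u, v) := by
  wlog h : u < v generalizing u v
  · rw [Sym2.eq_swap]
    exact this huv.symm (lt_of_le_of_ne (not_lt.1 h) huv.ne.symm)
  let f (q : Fin (x s(u, v)) × Fin 6) : GadgetAux G x := ⟨(u, v, q.1, q.2), h, huv, q.1.2⟩
  have hf : Function.Injective f := by
    rintro ⟨⟨i, _⟩, j⟩ ⟨⟨i', _⟩, j'⟩ hq
    simp_all [f]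
  have hrange : {p : GadgetAux G x | gadgetEdge G x p = s(u, v)} = Set.range f := by
    ext ⟨⟨a, b, i, j⟩, hab, _, hi⟩
    simp only [gadgetEdge, Sym2.eq_iff, Set.mem_ofPred_eq, Set.mem_range, f]
    constructor
    · rintro (⟨rfl, rfl⟩ | ⟨rfl, rfl⟩)
      · exact ⟨(⟨i, hi⟩, j), rfl⟩
      · exact absurd (hab.trans h) (lt_irrefl _)
    · rintro ⟨q, hq⟩
      simp_all
  rw [hrange, Set.ncard_range_of_injective hf, Nat.card_prod, Nat.card_fin, Nat.card_fin,
    mul_comm]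

lemma ncard_chainSet {u v : V} (huv : G.Adj u v) :
    (chainSet G x u v).ncard = 6 * x s(u, v) := by
  have : chainSet G x u v = .inr '' {p | gadgetEdge G x p = s(u, v)} := by
    ext w
    rw [mem_chainSet_iff huv.ne]
    aesop
  rw [this, Set.ncard_image_of_injective _ Sum.inr_injective, ncard_setOf_gadgetEdge_eq huv]

end Chain

section Iso

variable {V₁ V₂ : Type} [LinearOrder V₁] [LinearOrder V₂] {G₁ : SimpleGraph V₁}
  {G₂ : SimpleGraph V₂} {x₁ : Sym2 V₁ → ℕ} {x₂ : Sym2 V₂ → ℕ}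
  (Φ : gadgetGraph G₁ x₁ ≃g gadgetGraph G₂ x₂)

lemma onTriangle_iso_apply_iff {u : GadgetVert G₁ x₁} :
    OnTriangle G₂ x₂ (Φ u) ↔ OnTriangle G₁ x₁ u := by
  simp only [OnTriangle, Φ.surjective.exists, Φ.map_adj_iff]

lemma isOriginal_iso_apply_iff {u : GadgetVert G₁ x₁} :
    IsOriginal G₂ x₂ (Φ u) ↔ IsOriginal G₁ x₁ u := by
  rw [isOriginal_iff_not_onTriangle, isOriginal_iff_not_onTriangle, onTriangle_iso_apply_iff]

def chainGraphIso : chainGraph G₁ x₁ ≃g chainGraph G₂ x₂ where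
  toEquiv := Φ.toEquiv
  map_rel_iff' {u w} := by
    change (gadgetGraph G₂ x₂).Adj (Φ u) (Φ w) ∧ ¬ IsOriginal G₂ x₂ (Φ u) ∧
      ¬ IsOriginal G₂ x₂ (Φ w) ↔ _
    rw [Φ.map_adj_iff, isOriginal_iso_apply_iff, isOriginal_iso_apply_iff]
    rfl

def originalEquiv : V₁ ≃ V₂ where
  toFun v := (Φ (.inl v)).getLeft (Sum.isLeft_iff.2 ((isOriginal_iso_apply_iff Φ).2 ⟨v, rfl⟩))
  invFun v := (Φ.symm (.inl v)).getLeft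
    (Sum.isLeft_iff.2 ((isOriginal_iso_apply_iff Φ.symm).2 ⟨v, rfl⟩))
  left_inv v := Sum.inl_injective (β := GadgetAux G₁ x₁) (by simp)
  right_inv v := Sum.inl_injective (β := GadgetAux G₂ x₂) (by simp)

lemma iso_apply_inl (v : V₁) : Φ (.inl v) = .inl (originalEquiv Φ v) :=
  (Sum.inl_getLeft (Φ (.inl v)) _).symm

lemma isAttached_iso_apply_iff {w : GadgetVert G₁ x₁} {c : V₁} :
    IsAttached G₂ x₂ (Φ w) (originalEquiv Φ c) ↔ IsAttached G₁ x₁ w c := by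
  have hreach (w w' : GadgetVert G₁ x₁) :
      (chainGraph G₂ x₂).Reachable (Φ w) (Φ w') ↔ (chainGraph G₁ x₁).Reachable w w' :=
    Iso.reachable_iff (φ := chainGraphIso Φ)
  simp only [IsAttached, Φ.surjective.exists, ← iso_apply_inl, Φ.map_adj_iff, hreach]

lemma image_chainSet (u v : V₁) :
    Φ '' chainSet G₁ x₁ u v = chainSet G₂ x₂ (originalEquiv Φ u) (originalEquiv Φ v) := by
  rw [← Set.image_preimage_eq (chainSet G₂ x₂ _ _) Φ.surjective]
  congr 1
  ext w
  simp [chainSet, isOriginal_iso_apply_iff, isAttached_iso_apply_iff]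

end Iso

theorem stmt9_general {V₁ V₂ : Type} [LinearOrder V₁] [LinearOrder V₂]
    (G₁ : SimpleGraph V₁) (G₂ : SimpleGraph V₂)
    (k : ℕ)
    (x₁ : Sym2 V₁ → ℕ) (x₂ : Sym2 V₂ → ℕ)
    (hx₁ : ∀ e ∈ G₁.edgeSet, x₁ e ∈ Finset.Icc 1 k)
    (hx₂ : ∀ e ∈ G₂.edgeSet, x₂ e ∈ Finset.Icc 1 k)
    (hiso : Nonempty (gadgetGraph G₁ x₁ ≃g gadgetGraph G₂ x₂)) :
    ∃ φ : G₁ ≃g G₂, ∀ u v : V₁, G₁.Adj u v → x₂ s(φ u, φ v) = x₁ s(u, v) := by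
  obtain ⟨Φ⟩ := hiso
  have hpos₁ : PosLabels G₁ x₁ := fun e he => (Finset.mem_Icc.1 (hx₁ e he)).1
  have hpos₂ : PosLabels G₂ x₂ := fun e he => (Finset.mem_Icc.1 (hx₂ e he)).1
  have hadj (u v : V₁) : G₂.Adj (originalEquiv Φ u) (originalEquiv Φ v) ↔ G₁.Adj u v := by
    rw [adj_iff_chainSet_nonempty hpos₁, adj_iff_chainSet_nonempty hpos₂, ← image_chainSet,
      Set.image_nonempty, (originalEquiv Φ).injective.ne_iff]
  refine ⟨⟨originalEquiv Φ, hadj _ _⟩, fun u v huv => ?_⟩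
  have hcard := ncard_chainSet (x := x₂) ((hadj u v).2 huv)
  rw [← image_chainSet, Set.ncard_image_of_injective _ Φ.injective, ncard_chainSet huv] at hcard
  exact (Nat.eq_of_mul_eq_mul_left (by norm_num) hcard).symm

theorem stmt9 {V₁ V₂ : Type} [LinearOrder V₁] [LinearOrder V₂]
    (G₁ : SimpleGraph V₁) (G₂ : SimpleGraph V₂)
    (k : ℕ) (hk : 1 ≤ k)
    (x₁ : Sym2 V₁ → ℕ) (x₂ : Sym2 V₂ → ℕ)
    (hreg₁ : ThreeRegular G₁) (hreg₂ : ThreeRegular G₂)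
    (hx₁ : ∀ e ∈ G₁.edgeSet, x₁ e ∈ Finset.Icc 1 k)
    (hx₂ : ∀ e ∈ G₂.edgeSet, x₂ e ∈ Finset.Icc 1 k)
    (hiso : Nonempty (gadgetGraph G₁ x₁ ≃g gadgetGraph G₂ x₂)) :
    ∃ φ : G₁ ≃g G₂, ∀ u v : V₁, G₁.Adj u v → x₂ s(φ u, φ v) = x₁ s(u, v) :=
  stmt9_general G₁ G₂ k x₁ x₂ hx₁ hx₂ hiso

end LCLGadgetThms
end

section
/- Let G be a 3-regular simple graph with an edge labeling x : E(G) → ℕ taking positive values, and let G' = gadget(G, x). For any two vertices u and v of G at graph distance d in G, the corresponding original vertices u' and v' of G' satisfy gdist(u', v') = d. -/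
open scoped ENNReal

/-!
Put `φ w = dist(w, v)` on an original vertex `w` and `φ = 1/2 + min (dist(a, v)) (dist(b, v))`
on every gadget vertex of the expanded edge `{a, b}`. Across an edge of `G'` the potential `φ`
drops by at most the weight of that edge (only the two end edges of an expanded edge weigh
anything, and `dist(a, v)`, `dist(b, v)` differ by at most one), so every walk from `u` to `v`
weighs at least `φ u = dist(u, v)`. Conversely, an edge of `G` lifts to the walk along its
expanded edge through vertices `1, 2, 4, 6` of each A-gadget, of weight `1/2 + 0 + 1/2 = 1`,
so a shortest path of `G` lifts to a walk of weight `dist(u, v)`.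
-/

namespace LCLGadget
open SimpleGraph

lemma edist_le_one_add_edist {V : Type*} {G : SimpleGraph V} {a b v : V} (hab : G.Adj a b) :
    (G.edist a v : ℝ≥0∞) ≤ 1 + G.edist b v := by
  rw [← ENat.toENNReal_one, ← ENat.toENNReal_add, ENat.toENNReal_le]
  calc G.edist a v ≤ G.edist a b + G.edist b v := G.edist_triangle
    _ = 1 + G.edist b v := by rw [edist_eq_one_iff_adj.2 hab]

instance : DecidableRel AAdj := fun _ _ => inferInstanceAs (Decidable (_ ∈ _))

lemma AAdj.ne : ∀ {j j' : Fin 6}, AAdj j j' → j ≠ j' := by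
  decide

variable {V : Type} [LinearOrder V] {G : SimpleGraph V} {x : Sym2 V → ℕ}

lemma wt_comm (u v : GadgetVert G x) : wt G x u v = wt G x v u := by
  cases u <;> cases v <;> rfl

section WalkWeight

noncomputable def walkWeight {u v : GadgetVert G x} (p : (gadgetGraph G x).Walk u v) : ℝ≥0∞ :=
  (p.darts.map fun d => wt G x d.toProd.1 d.toProd.2).sum

@[simp]
lemma walkWeight_nil {u : GadgetVert G x} :
    walkWeight (Walk.nil : (gadgetGraph G x).Walk u u) = 0 := rfl

@[simp]
lemma walkWeight_cons {u v w : GadgetVert G x} (h : (gadgetGraph G x).Adj u v)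
    (p : (gadgetGraph G x).Walk v w) : walkWeight (Walk.cons h p) = wt G x u v + walkWeight p := by
  simp [walkWeight]

@[simp]
lemma walkWeight_append {u v w : GadgetVert G x} (p : (gadgetGraph G x).Walk u v)
    (q : (gadgetGraph G x).Walk v w) : walkWeight (p.append q) = walkWeight p + walkWeight q := by
  simp [walkWeight, Walk.darts_append]

@[simp]
lemma walkWeight_reverse {u v : GadgetVert G x} (p : (gadgetGraph G x).Walk u v) :
    walkWeight p.reverse = walkWeight p := by
  simp only [walkWeight, Walk.darts_reverse, List.map_reverse, List.sum_reverse, List.map_map]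
  congr 1
  exact List.map_congr_left fun d _ => wt_comm _ _

lemma gdist_le_walkWeight {u v : GadgetVert G x} (p : (gadgetGraph G x).Walk u v) :
    gdist G x u v ≤ walkWeight p :=
  iInf_le _ p

lemma le_gdist {u v : GadgetVert G x} {c : ℝ≥0∞}
    (h : ∀ p : (gadgetGraph G x).Walk u v, c ≤ walkWeight p) : c ≤ gdist G x u v :=
  le_iInf h

end WalkWeight

section LowerBound

lemma not_adj_inl_inl (w w' : V) : ¬ (gadgetGraph G x).Adj (Sum.inl w) (Sum.inl w') := by
  simp [gadgetGraph, gadgetRel]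

lemma eq_or_eq_of_adj_inl_inr {w : V} {p : GadgetAux G x}
    (h : (gadgetGraph G x).Adj (Sum.inl w) (Sum.inr p)) : w = p.1.1 ∨ w = p.1.2.1 := by
  obtain ⟨⟨a, b, i, j⟩, hp⟩ := p
  simp only [gadgetGraph, fromRel_adj, gadgetRel, or_false] at h
  rcases h.2 with ⟨rfl, -⟩ | ⟨rfl, -⟩
  · exact Or.inl rfl
  · exact Or.inr rfl

lemma ends_eq_of_adj_inr_inr {p q : GadgetAux G x}
    (h : (gadgetGraph G x).Adj (Sum.inr p) (Sum.inr q)) :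
    p.1.1 = q.1.1 ∧ p.1.2.1 = q.1.2.1 := by
  obtain ⟨⟨a, b, i, j⟩, hp⟩ := p
  obtain ⟨⟨a', b', i', j'⟩, hq⟩ := q
  simp only [gadgetGraph, fromRel_adj, gadgetRel] at h
  rcases h.2 with ⟨rfl, rfl, -⟩ | ⟨rfl, rfl, -⟩ <;> exact ⟨rfl, rfl⟩

noncomputable def potential (G : SimpleGraph V) (x : Sym2 V → ℕ) (v : V) :
    GadgetVert G x → ℝ≥0∞
  | Sum.inl w => G.edist w v
  | Sum.inr p => 1/2 + min (G.edist p.1.1 v : ℝ≥0∞) (G.edist p.1.2.1 v)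

lemma potential_inl_le {v w : V} {p : GadgetAux G x}
    (h : (gadgetGraph G x).Adj (Sum.inl w) (Sum.inr p)) :
    potential G x v (Sum.inl w) ≤ wt G x (Sum.inl w) (Sum.inr p) + potential G x v (Sum.inr p) := by
  have hab : G.Adj p.1.1 p.1.2.1 := p.2.2.1
  simp only [potential, wt]
  rw [← add_assoc, ENNReal.add_halves, ← min_add_add_left, le_min_iff]
  rcases eq_or_eq_of_adj_inl_inr h with rfl | rfl
  · exact ⟨le_add_self, edist_le_one_add_edist hab⟩
  · exact ⟨edist_le_one_add_edist hab.symm, le_add_self⟩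

lemma potential_inr_le {v w : V} {p : GadgetAux G x}
    (h : (gadgetGraph G x).Adj (Sum.inl w) (Sum.inr p)) :
    potential G x v (Sum.inr p) ≤ wt G x (Sum.inr p) (Sum.inl w) + potential G x v (Sum.inl w) := by
  simp only [potential, wt]
  gcongr
  rcases eq_or_eq_of_adj_inl_inr h with rfl | rfl
  · exact min_le_left _ _
  · exact min_le_right _ _

lemma potential_le_wt_add {v : V} {s t : GadgetVert G x} (h : (gadgetGraph G x).Adj s t) :
    potential G x v s ≤ wt G x s t + potential G x v t := by
  match s, t, h with
  | Sum.inl w, Sum.inl w', h => exact absurd h (not_adj_inl_inl w w')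
  | Sum.inl _, Sum.inr _, h => exact potential_inl_le h
  | Sum.inr _, Sum.inl _, h => exact potential_inr_le h.symm
  | Sum.inr p, Sum.inr q, h =>
    obtain ⟨ha, hb⟩ := ends_eq_of_adj_inr_inr h
    simp [potential, wt, ha, hb]

lemma potential_le_walkWeight_add (v : V) {s t : GadgetVert G x} :
    ∀ p : (gadgetGraph G x).Walk s t, potential G x v s ≤ walkWeight p + potential G x v t
  | .nil => by simp
  | .cons h p => by
    rw [walkWeight_cons, add_assoc]
    exact (potential_le_wt_add h).trans (add_le_add_right (potential_le_walkWeight_add v p) _)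

lemma edist_le_gdist (u v : V) : (G.edist u v : ℝ≥0∞) ≤ gdist G x (Sum.inl u) (Sum.inl v) :=
  le_gdist fun p => by simpa [potential] using potential_le_walkWeight_add v p

end LowerBound

section UpperBound

variable {a b : V} (hab : a < b) (hadj : G.Adj a b)

abbrev chainVert (i : ℕ) (hi : i < x s(a, b)) (j : Fin 6) : GadgetVert G x :=
  Sum.inr ⟨(a, b, i, j), hab, hadj, hi⟩

lemma adj_chainVert_of_AAdj {i : ℕ} (hi : i < x s(a, b)) {j j' : Fin 6} (h : AAdj j j') :
    (gadgetGraph G x).Adj (chainVert hab hadj i hi j) (chainVert hab hadj i hi j') := by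
  refine (fromRel_adj _ _ _).2 ⟨?_, Or.inl ⟨rfl, rfl, Or.inl ⟨rfl, h⟩⟩⟩
  simpa using h.ne

lemma adj_chainVert_succ {i : ℕ} (hi : i < x s(a, b)) (hi' : i + 1 < x s(a, b)) :
    (gadgetGraph G x).Adj (chainVert hab hadj i hi 5) (chainVert hab hadj (i + 1) hi' 0) :=
  (fromRel_adj _ _ _).2 ⟨by simp, Or.inl ⟨rfl, rfl, Or.inr ⟨rfl, rfl, rfl⟩⟩⟩

lemma adj_inl_chainVert_first (hx : 0 < x s(a, b)) :
    (gadgetGraph G x).Adj (Sum.inl a) (chainVert hab hadj 0 hx 0) :=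
  (fromRel_adj _ _ _).2 ⟨by simp, Or.inl (Or.inl ⟨rfl, rfl, rfl⟩)⟩

lemma adj_chainVert_last_inl (hx : x s(a, b) - 1 < x s(a, b)) :
    (gadgetGraph G x).Adj (chainVert hab hadj (x s(a, b) - 1) hx 5) (Sum.inl b) :=
  (fromRel_adj _ _ _).2 ⟨by simp, Or.inr (Or.inr ⟨rfl, rfl, rfl⟩)⟩

lemma exists_walk_across_gadget {i : ℕ} (hi : i < x s(a, b)) :
    ∃ p : (gadgetGraph G x).Walk (chainVert hab hadj i hi 0) (chainVert hab hadj i hi 5),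
      walkWeight p = 0 := by
  have aadj : ∀ j j' : Fin 6, AAdj j j' →
      (gadgetGraph G x).Adj (chainVert hab hadj i hi j) (chainVert hab hadj i hi j') :=
    fun _ _ => adj_chainVert_of_AAdj hab hadj hi
  refine ⟨.cons (aadj 0 1 (by decide)) (.cons (aadj 1 3 (by decide))
    (.cons (aadj 3 5 (by decide)) .nil)), ?_⟩
  simp [wt]

lemma exists_walk_along_chain (hx : 0 < x s(a, b)) :
    ∀ (k : ℕ) (hk : k < x s(a, b)),
      ∃ p : (gadgetGraph G x).Walk (chainVert hab hadj 0 hx 0) (chainVert hab hadj k hk 5),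
        walkWeight p = 0
  | 0, _ => exists_walk_across_gadget hab hadj hx
  | k + 1, hk => by
    obtain ⟨p, hp⟩ := exists_walk_along_chain hx k (by omega)
    obtain ⟨q, hq⟩ := exists_walk_across_gadget hab hadj hk
    refine ⟨p.append (.cons (adj_chainVert_succ hab hadj _ hk) q), ?_⟩
    simp [hp, hq, wt]

end UpperBound

lemma exists_walk_of_adj_of_lt {a b : V} (hab : a < b) (hadj : G.Adj a b) (hx : 0 < x s(a, b)) :
    ∃ p : (gadgetGraph G x).Walk (Sum.inl a) (Sum.inl b), walkWeight p = 1 := by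
  have hlast : x s(a, b) - 1 < x s(a, b) := by omega
  obtain ⟨p, hp⟩ := exists_walk_along_chain hab hadj hx _ hlast
  refine ⟨.cons (adj_inl_chainVert_first hab hadj hx)
    (p.concat (adj_chainVert_last_inl hab hadj hlast)), ?_⟩
  simp [Walk.concat_eq_append, hp, wt, ENNReal.inv_two_add_inv_two]

lemma exists_walk_of_adj {a b : V} (hadj : G.Adj a b) (hx : 0 < x s(a, b)) :
    ∃ p : (gadgetGraph G x).Walk (Sum.inl a) (Sum.inl b), walkWeight p = 1 := by
  rcases hadj.ne.lt_or_gt with h | h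
  · exact exists_walk_of_adj_of_lt h hadj hx
  · obtain ⟨p, hp⟩ := exists_walk_of_adj_of_lt h hadj.symm (by rwa [Sym2.eq_swap])
    exact ⟨p.reverse, by rw [walkWeight_reverse, hp]⟩

lemma exists_walk_weight_eq_length (hx : PosLabels G x) {u v : V} :
    ∀ W : G.Walk u v,
      ∃ p : (gadgetGraph G x).Walk (Sum.inl u) (Sum.inl v), walkWeight p = W.length
  | .nil => ⟨.nil, by simp⟩
  | .cons h W => by
    obtain ⟨p, hp⟩ := exists_walk_of_adj h (hx _ h)
    obtain ⟨q, hq⟩ := exists_walk_weight_eq_length hx W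
    exact ⟨p.append q, by simp [hp, hq, add_comm]⟩

theorem gdist_inl_inl (hx : PosLabels G x) (u v : V) :
    gdist G x (Sum.inl u) (Sum.inl v) = G.edist u v := by
  refine le_antisymm ?_ (edist_le_gdist u v)
  by_cases hr : G.Reachable u v
  · obtain ⟨W, hW⟩ := hr.exists_walk_length_eq_edist
    obtain ⟨p, hp⟩ := exists_walk_weight_eq_length hx W
    rw [← hW, ENat.toENNReal_coe, ← hp]
    exact gdist_le_walkWeight p
  · simp [edist_eq_top_of_not_reachable hr]

end LCLGadget

namespace LCLGadgetThms
open LCLGadget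

variable {V : Type} [LinearOrder V]

theorem stmt11_general (G : SimpleGraph V) (x : Sym2 V → ℕ)
    (hxpos : PosLabels G x)
    (u v : V) (d : ℕ) (hd : G.edist u v = d) :
    gdist G x (Sum.inl u) (Sum.inl v) = (d : ℝ≥0∞) := by
  rw [gdist_inl_inl hxpos, hd, ENat.toENNReal_coe]

theorem stmt11 (G : SimpleGraph V) (x : Sym2 V → ℕ)
    (hreg : ThreeRegular G) (hxpos : PosLabels G x)
    (u v : V) (d : ℕ) (hd : G.edist u v = d) :
    gdist G x (Sum.inl u) (Sum.inl v) = (d : ℝ≥0∞) :=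
  stmt11_general G x hxpos u v d hd

end LCLGadgetThms
end

section
/- Let G be a 3-regular simple graph with an edge labeling x : E(G) → ℕ taking positive values, and let G' = gadget(G, x). Then a vertex of G' lies on no cycle of length 3 in G' if and only if it is an original vertex; in particular, every inner vertex and every outer vertex of G' lies on a triangle of G', and no original vertex does. -/
open scoped ENNReal

namespace LCLGadgetThms
open LCLGadget

variable {V : Type} [LinearOrder V]

instance (i j : Fin 6) : Decidable (AAdj i j) := by unfold AAdj; infer_instance

lemma gadget_adj_inner {G : SimpleGraph V} {x : Sym2 V → ℕ} {a b : V} {i : ℕ}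
    (h : a < b ∧ G.Adj a b ∧ i < x s(a, b)) (j j' : Fin 6) (hne : j ≠ j')
    (hadj : AAdj j j' ∨ AAdj j' j) :
    (gadgetGraph G x).Adj (Sum.inr ⟨(a, b, i, j), h⟩) (Sum.inr ⟨(a, b, i, j'), h⟩) := by
  rw [gadgetGraph, SimpleGraph.fromRel_adj]
  refine ⟨by simp [hne], ?_⟩
  rcases hadj with hadj | hadj
  · exact Or.inl ⟨rfl, rfl, Or.inl ⟨rfl, hadj⟩⟩
  · exact Or.inr ⟨rfl, rfl, Or.inl ⟨rfl, hadj⟩⟩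

theorem stmt12 (G : SimpleGraph V) (x : Sym2 V → ℕ)
    (hreg : ThreeRegular G) (hxpos : PosLabels G x) :
    ∀ u : GadgetVert G x, (¬ OnTriangle G x u) ↔ IsOriginal G x u := by
  intro u
  constructor
  · intro h
    cases u with
    | inl v => exact ⟨v, rfl⟩
    | inr p =>
      exfalso
      apply h
      obtain ⟨⟨a, b, i, j⟩, hp⟩ := p
      fin_cases j
      · exact ⟨_, _, gadget_adj_inner hp 0 1 (by decide) (by decide),
          gadget_adj_inner hp 0 2 (by decide) (by decide),
          gadget_adj_inner hp 1 2 (by decide) (by decide)⟩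
      · exact ⟨_, _, gadget_adj_inner hp 1 0 (by decide) (by decide),
          gadget_adj_inner hp 1 2 (by decide) (by decide),
          gadget_adj_inner hp 0 2 (by decide) (by decide)⟩
      · exact ⟨_, _, gadget_adj_inner hp 2 0 (by decide) (by decide),
          gadget_adj_inner hp 2 1 (by decide) (by decide),
          gadget_adj_inner hp 0 1 (by decide) (by decide)⟩
      · exact ⟨_, _, gadget_adj_inner hp 3 4 (by decide) (by decide),
          gadget_adj_inner hp 3 5 (by decide) (by decide),
          gadget_adj_inner hp 4 5 (by decide) (by decide)⟩
      · exact ⟨_, _, gadget_adj_inner hp 4 3 (by decide) (by decide),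
          gadget_adj_inner hp 4 5 (by decide) (by decide),
          gadget_adj_inner hp 3 5 (by decide) (by decide)⟩
      · exact ⟨_, _, gadget_adj_inner hp 5 3 (by decide) (by decide),
          gadget_adj_inner hp 5 4 (by decide) (by decide),
          gadget_adj_inner hp 3 4 (by decide) (by decide)⟩
  · rintro ⟨v, rfl⟩ ⟨w1, w2, h1, h2, h3⟩
    rw [gadgetGraph, SimpleGraph.fromRel_adj] at h1 h2 h3
    obtain ⟨-, h1⟩ := h1
    obtain ⟨-, h2⟩ := h2
    obtain ⟨hne3, h3⟩ := h3
    -- w1 and w2 must be gadget vertices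
    cases w1 with
    | inl w => simp [gadgetRel] at h1
    | inr p1 =>
      cases w2 with
      | inl w => simp [gadgetRel] at h2
      | inr p2 =>
        obtain ⟨⟨a1, b1, i1, j1⟩, hp1⟩ := p1
        obtain ⟨⟨a2, b2, i2, j2⟩, hp2⟩ := p2
        have h1' : (v = a1 ∧ i1 = 0 ∧ j1 = 0) ∨
            (v = b1 ∧ i1 = x s(a1, b1) - 1 ∧ j1 = 5) := by
          rcases h1 with h1 | h1
          · exact h1
          · simp [gadgetRel] at h1
        have h2' : (v = a2 ∧ i2 = 0 ∧ j2 = 0) ∨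
            (v = b2 ∧ i2 = x s(a2, b2) - 1 ∧ j2 = 5) := by
          rcases h2 with h2 | h2
          · exact h2
          · simp [gadgetRel] at h2
        have h3' : a1 = a2 ∧ b1 = b2 ∧
            ((i1 = i2 ∧ AAdj j1 j2) ∨ (i2 = i1 + 1 ∧ j1 = 5 ∧ j2 = 0) ∨
             (i1 = i2 ∧ AAdj j2 j1) ∨ (i1 = i2 + 1 ∧ j2 = 5 ∧ j1 = 0)) := by
          rcases h3 with ⟨ha, hb, h⟩ | ⟨ha, hb, h⟩
          · exact ⟨ha, hb, h.imp id Or.inl⟩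
          · subst ha; subst hb
            refine ⟨rfl, rfl, ?_⟩
            rcases h with ⟨hi, hA⟩ | hB
            · exact Or.inr (Or.inr (Or.inl ⟨hi.symm, hA⟩))
            · exact Or.inr (Or.inr (Or.inr hB))
        obtain ⟨ha, hb, h3'⟩ := h3'
        subst ha hb
        rcases h1' with ⟨hv1, hi1, hj1⟩ | ⟨hv1, hi1, hj1⟩ <;>
          rcases h2' with ⟨hv2, hi2, hj2⟩ | ⟨hv2, hi2, hj2⟩ <;>
          subst hj1 hj2 hi1 hi2
        · rcases h3' with ⟨-, h⟩ | ⟨-, h, h'⟩ | ⟨-, h⟩ | ⟨-, h, h'⟩ <;>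
            first | exact absurd h (by decide) | exact absurd h' (by decide)
        · exact absurd (hv1 ▸ hv2 : a1 = b1) (ne_of_lt hp1.1)
        · exact absurd (hv2 ▸ hv1 : a1 = b1) (ne_of_lt hp1.1)
        · rcases h3' with ⟨-, h⟩ | ⟨-, h, h'⟩ | ⟨-, h⟩ | ⟨-, h, h'⟩ <;>
            first | exact absurd h (by decide) | exact absurd h' (by decide)

end LCLGadgetThms
end

section
/- Let G be a graph with vertex labeling σ, let r ≥ 1, and let u and v be adjacent vertices of G. Then (T^r_G(v→u), σ) and (T^r_G(u∖v), σ) are isomorphic as labeled rooted trees. -/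
namespace PNViews

/-- A labeled rooted tree, presented by its carrier, root, child relation
(`child a b` means that `b` is a child of `a`), and vertex labels. -/
structure LRT (S : Type) : Type 1 where
  carrier : Type
  root : carrier
  child : carrier → carrier → Prop
  label : carrier → S

/-- An isomorphism of labeled rooted trees. -/
structure LRTIso {S : Type} (T₁ T₂ : LRT S) where
  toEquiv : T₁.carrier ≃ T₂.carrier
  root_eq : toEquiv T₁.root = T₂.root
  child_iff : ∀ a b : T₁.carrier, T₁.child a b ↔ T₂.child (toEquiv a) (toEquiv b)
  label_eq : ∀ a : T₁.carrier, T₂.label (toEquiv a) = T₁.label a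

/-- `NBWalk G l` : the list `l = [v₀, …, v_ℓ]` is a non-backtracking walk in `G`,
i.e. consecutive vertices are adjacent and `v_{i+2} ≠ v_i` for all `i`. -/
inductive NBWalk {V : Type} (G : SimpleGraph V) : List V → Prop
  | single (v : V) : NBWalk G [v]
  | pair {u v : V} : G.Adj u v → NBWalk G [u, v]
  | cons {a b c : V} {rest : List V} : G.Adj a b → a ≠ c →
      NBWalk G (b :: c :: rest) → NBWalk G (a :: b :: c :: rest)

/-- The radius-`r` PN-view `(T^r_G(v), σ)` of the vertex `v` in the labeled graph
`(G, σ)`: the labeled rooted tree of all non-backtracking walks of length at most `r`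
starting at `v`, where each walk of length `ℓ+1` is a child of its length-`ℓ` prefix and
the label of a walk is `σ` applied to its final vertex. -/
def PNview {V S : Type} (G : SimpleGraph V) (σ : V → S) (v : V) (r : ℕ) : LRT S where
  carrier := {l : List V // NBWalk G l ∧ l.head? = some v ∧ l.length ≤ r + 1}
  root := ⟨[v], NBWalk.single v, rfl, Nat.succ_le_succ (Nat.zero_le r)⟩
  child a b := ∃ w, b.val = a.val ++ [w]
  label a := σ (a.val.getLastD v)

/-- The directional subtree `(T^r_G(v → u), σ)` (for `u` a neighbor of `v`): the PN-view
re-rooted at the child `u` of the root, restricted to the branch through `u`, and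
truncated to depth `r - 1`. Concretely: all non-backtracking walks starting with the
step `v, u`, of length at most `r`. -/
def PNviewDir {V S : Type} (G : SimpleGraph V) (σ : V → S) (v u : V) (r : ℕ)
    (hr : 1 ≤ r) (h : G.Adj v u) : LRT S where
  carrier := {l : List V // NBWalk G l ∧ (∃ rest, l = v :: u :: rest) ∧ l.length ≤ r + 1}
  root := ⟨[v, u], NBWalk.pair h, ⟨[], rfl⟩, Nat.succ_le_succ hr⟩
  child a b := ∃ w, b.val = a.val ++ [w]
  label a := σ (a.val.getLastD v)

/-- The pruned subtree `(T^r_G(v ∖ u), σ)`: the PN-view with the branch containing the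
child `u` of the root removed, truncated to depth `r - 1`. Concretely: all
non-backtracking walks starting at `v` not beginning with the step `v, u`,
of length at most `r - 1`. -/
def PNviewMinus {V S : Type} (G : SimpleGraph V) (σ : V → S) (v u : V) (r : ℕ)
    (hr : 1 ≤ r) : LRT S where
  carrier := {l : List V // NBWalk G l ∧ l.head? = some v ∧
    (¬ ∃ rest, l = v :: u :: rest) ∧ l.length ≤ r}
  root := ⟨[v], NBWalk.single v, rfl, by rintro ⟨rest, h⟩; simp at h, hr⟩
  child a b := ∃ w, b.val = a.val ++ [w]
  label a := σ (a.val.getLastD v)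

namespace NBWalk

variable {V : Type} {G : SimpleGraph V}

theorem cons_cons_iff {a b : V} {rest : List V} :
    NBWalk G (a :: b :: rest) ↔ G.Adj a b ∧ rest.head? ≠ some a ∧ NBWalk G (b :: rest) := by
  constructor
  · rintro (_ | hab | ⟨hab, hac, hw⟩)
    · exact ⟨hab, by simp, .single _⟩
    · exact ⟨hab, by simpa using hac.symm, hw⟩
  · rintro ⟨hab, hrest, hw⟩
    cases rest with
    | nil => exact .pair hab
    | cons c rest => exact .cons hab (by simpa [eq_comm] using hrest) hw

end NBWalk

section DirMinus

variable {V S : Type} {G : SimpleGraph V} {σ : V → S} {r : ℕ} {hr : 1 ≤ r} {v u : V}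

/-- By `NBWalk.cons_cons_iff`, a non-backtracking walk `v, u, …` is exactly the step `v → u`
followed by a non-backtracking walk from `u` that does not step back to `v`, so dropping the
first vertex is a bijection; it shifts lengths by one, matching the depths `r` and `r - 1`. -/
def dirEquivMinus (h : G.Adj v u) :
    (PNviewDir G σ v u r hr h).carrier ≃ (PNviewMinus G σ u v r hr).carrier where
  toFun x := ⟨x.val.tail, by
    obtain ⟨l, hw, ⟨rest, rfl⟩, hlen⟩ := x
    obtain ⟨-, hback, hw⟩ := NBWalk.cons_cons_iff.mp hw
    refine ⟨hw, rfl, ?_, by simpa using hlen⟩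
    simpa [List.head?_eq_some_iff] using hback⟩
  invFun y := ⟨v :: y.val, by
    obtain ⟨l, hw, hhead, hback, hlen⟩ := y
    obtain ⟨rest, rfl⟩ := List.head?_eq_some_iff.mp hhead
    refine ⟨NBWalk.cons_cons_iff.mpr ⟨h, ?_, hw⟩, ⟨rest, rfl⟩, by simpa using hlen⟩
    simpa [List.head?_eq_some_iff] using hback⟩
  left_inv := by
    rintro ⟨l, -, ⟨rest, rfl⟩, -⟩
    rfl
  right_inv := by
    rintro ⟨l, -, hhead, -⟩
    obtain ⟨rest, rfl⟩ := List.head?_eq_some_iff.mp hhead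
    rfl

def dirIsoMinus (h : G.Adj v u) :
    LRTIso (PNviewDir G σ v u r hr h) (PNviewMinus G σ u v r hr) where
  toEquiv := dirEquivMinus h
  root_eq := rfl
  child_iff := by
    rintro ⟨a, -, ⟨ra, rfl⟩, -⟩ ⟨b, -, ⟨rb, rfl⟩, -⟩
    show (∃ w, v :: u :: rb = v :: u :: ra ++ [w]) ↔ ∃ w, u :: rb = u :: ra ++ [w]
    simp
  label_eq := by
    rintro ⟨a, -, ⟨ra, rfl⟩, -⟩
    show σ ((u :: ra).getLastD u) = σ ((v :: u :: ra).getLastD v)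
    simp only [List.getLastD_cons]

end DirMinus

theorem stmt13 {V S : Type} (G : SimpleGraph V) (σ : V → S) (r : ℕ) (hr : 1 ≤ r)
    {v u : V} (h : G.Adj v u) :
    Nonempty (LRTIso (PNviewDir G σ v u r hr h) (PNviewMinus G σ u v r hr)) :=
  ⟨dirIsoMinus h⟩

end PNViews
end
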